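/- For all u, v > 0, θ(u+1, v+1) ≤ θ(u,v) + θ₁(u,v) + θ₂(u,v), where θ is the logarithmic mean and θ₁, θ₂ its partial derivatives. -/

import Mathlib

/-!
Write `θ x = logMean (u + x) (v + x)`. Since `(u + x) - (v + x)` does not depend on `x`, one finds
`θ' = θ² / ((u + x) (v + x))` and `θ'' = θ² (2θ - (u + x) - (v + x)) / ((u + x) (v + x))²`, which is
`≤ 0` because the logarithmic mean lies below the arithmetic mean. So `θ` is concave and lies
below its tangent at `0`, whose slope `logMean u v ² / (u v)` is also `logMean₁ u v + logMean₂ u v`.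

Both bounds `2st / (s + t) ≤ logMean s t ≤ (s + t) / 2` follow from the series
`log ((1 + y) / (1 - y)) = 2 ∑ y^(2k+1) / (2k+1)` at `y = (s - t) / (s + t)`. Together they give
`logMean x s = (x + s) / 2 + O((x - s)²)`, hence `logMean₁ s s = 1 / 2` on the diagonal, where the
closed formula for the derivative breaks down.
-/

open Real Set Topology

/-- The logarithmic mean, extended by `θ(s,s) = s` and `θ(s,0) = θ(0,t) = 0`. -/
noncomputable def logMean (s t : ℝ) : ℝ :=
  if s = t then s else if s = 0 ∨ t = 0 then 0 else (s - t) / (Real.log s - Real.log t)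

/-- Partial derivative of the logarithmic mean in the first variable. -/
noncomputable def logMean₁ (s t : ℝ) : ℝ := deriv (fun x => logMean x t) s

/-- Partial derivative of the logarithmic mean in the second variable. -/
noncomputable def logMean₂ (s t : ℝ) : ℝ := deriv (fun y => logMean s y) t

theorem logMean_comm (s t : ℝ) : logMean s t = logMean t s := by
  unfold logMean
  rcases eq_or_ne s t with rfl | h
  · rfl
  rw [if_neg h, if_neg h.symm]
  by_cases h0 : s = 0 ∨ t = 0
  · rw [if_pos h0, if_pos h0.symm]
  · rw [if_neg h0, if_neg (mt Or.symm h0), ← neg_sub t s, ← neg_sub (log t) (log s),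
      neg_div_neg_eq]

@[simp]
theorem logMean_self (s : ℝ) : logMean s s = s := if_pos rfl

theorem logMean_of_ne {s t : ℝ} (hs : 0 < s) (ht : 0 < t) (hst : s ≠ t) :
    logMean s t = (s - t) / (log s - log t) := by
  rw [logMean, if_neg hst, if_neg (by simp [hs.ne', ht.ne'])]

theorem log_sub_log_ne_zero {s t : ℝ} (hs : 0 < s) (ht : 0 < t) (hst : s ≠ t) :
    log s - log t ≠ 0 :=
  sub_ne_zero.2 fun h => hst (log_injOn_pos hs ht h)

theorem hasSum_mul_log_sub_log {y : ℝ} (hy : |y| < 1) :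
    HasSum (fun k : ℕ => 2 / (2 * k + 1) * (y ^ 2) ^ (k + 1))
      (y * (log (1 + y) - log (1 - y))) := by
  have hterm : (fun k : ℕ => 2 / (2 * k + 1) * (y ^ 2) ^ (k + 1)) =
      fun k : ℕ => y * (2 * (1 / (2 * k + 1)) * y ^ (2 * k + 1)) := by
    funext k
    ring
  rw [hterm]
  exact (hasSum_log_sub_log_of_abs_lt_one hy).mul_left y

theorem two_mul_sq_le_mul_log_sub_log {y : ℝ} (hy : |y| < 1) :
    2 * y ^ 2 ≤ y * (log (1 + y) - log (1 - y)) := by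
  simpa using le_hasSum (hasSum_mul_log_sub_log hy) 0 fun k _ => by positivity

theorem mul_log_sub_log_le {y : ℝ} (hy : |y| < 1) :
    y * (log (1 + y) - log (1 - y)) ≤ 2 * y ^ 2 / (1 - y ^ 2) := by
  have hy2 : y ^ 2 < 1 := (sq_lt_one_iff_abs_lt_one y).2 hy
  have hgeom := (hasSum_geometric_of_lt_one (sq_nonneg y) hy2).mul_left (2 * y ^ 2)
  rw [← div_eq_mul_inv] at hgeom
  refine hasSum_le (fun k => ?_) (hasSum_mul_log_sub_log hy) hgeom
  have hk : 2 / (2 * k + 1) ≤ (2 : ℝ) :=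
    div_le_self two_pos.le (by linarith [k.cast_nonneg (α := ℝ)])
  calc 2 / (2 * k + 1) * (y ^ 2) ^ (k + 1) ≤ 2 * (y ^ 2) ^ (k + 1) := by gcongr
    _ = 2 * y ^ 2 * (y ^ 2) ^ k := by ring

theorem log_sub_log_eq_log_one_add_sub {s t : ℝ} (hs : 0 < s) (ht : 0 < t) :
    log s - log t = log (1 + (s - t) / (s + t)) - log (1 - (s - t) / (s + t)) := by
  have hst : 0 < s + t := by positivity
  have h1 : 1 + (s - t) / (s + t) = 2 * s / (s + t) := by field_simp; ring
  have h2 : 1 - (s - t) / (s + t) = 2 * t / (s + t) := by field_simp; ring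
  rw [h1, h2, ← log_div hs.ne' ht.ne', ← log_div (by positivity) (by positivity)]
  congr 1
  field_simp

theorem abs_sub_div_add_lt_one {s t : ℝ} (hs : 0 < s) (ht : 0 < t) : |(s - t) / (s + t)| < 1 := by
  rw [abs_div, abs_of_pos (add_pos hs ht), div_lt_one (add_pos hs ht), abs_sub_lt_iff]
  constructor <;> linarith

theorem two_mul_sq_div_add_le_sub_mul_log_sub_log {s t : ℝ} (hs : 0 < s) (ht : 0 < t) :
    2 * (s - t) ^ 2 / (s + t) ≤ (s - t) * (log s - log t) := by
  have hst : 0 < s + t := add_pos hs ht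
  have h := two_mul_sq_le_mul_log_sub_log (abs_sub_div_add_lt_one hs ht)
  rw [← log_sub_log_eq_log_one_add_sub hs ht] at h
  calc 2 * (s - t) ^ 2 / (s + t) = (s + t) * (2 * ((s - t) / (s + t)) ^ 2) := by
        field_simp
    _ ≤ (s + t) * ((s - t) / (s + t) * (log s - log t)) := by gcongr
    _ = (s - t) * (log s - log t) := by field_simp

theorem sub_mul_log_sub_log_le {s t : ℝ} (hs : 0 < s) (ht : 0 < t) :
    (s - t) * (log s - log t) ≤ (s - t) ^ 2 * (s + t) / (2 * s * t) := by
  have hst : 0 < s + t := add_pos hs ht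
  have h := mul_log_sub_log_le (abs_sub_div_add_lt_one hs ht)
  rw [← log_sub_log_eq_log_one_add_sub hs ht] at h
  have hy : 1 - ((s - t) / (s + t)) ^ 2 = 4 * s * t / (s + t) ^ 2 := by
    field_simp
    ring
  calc (s - t) * (log s - log t) = (s + t) * ((s - t) / (s + t) * (log s - log t)) := by
        field_simp
    _ ≤ (s + t) * (2 * ((s - t) / (s + t)) ^ 2 / (1 - ((s - t) / (s + t)) ^ 2)) := by gcongr
    _ = (s - t) ^ 2 * (s + t) / (2 * s * t) := by
        rw [hy]
        field_simp
        ring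

theorem logMean_eq_sq_div {s t : ℝ} (hs : 0 < s) (ht : 0 < t) (hst : s ≠ t) :
    logMean s t = (s - t) ^ 2 / ((s - t) * (log s - log t)) := by
  have := log_sub_log_ne_zero hs ht hst
  have := sub_ne_zero.2 hst
  rw [logMean_of_ne hs ht hst]
  field_simp

theorem logMean_le_add_div_two {s t : ℝ} (hs : 0 < s) (ht : 0 < t) :
    logMean s t ≤ (s + t) / 2 := by
  rcases eq_or_ne s t with rfl | hst
  · simp
  have h := two_mul_sq_div_add_le_sub_mul_log_sub_log hs ht
  have hP : 0 < (s - t) * (log s - log t) :=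
    lt_of_lt_of_le (by have := sub_ne_zero.2 hst; positivity) h
  rw [logMean_eq_sq_div hs ht hst, div_le_iff₀ hP]
  rw [div_le_iff₀ (add_pos hs ht)] at h
  linarith

theorem two_mul_mul_div_add_le_logMean {s t : ℝ} (hs : 0 < s) (ht : 0 < t) :
    2 * s * t / (s + t) ≤ logMean s t := by
  rcases eq_or_ne s t with rfl | hst
  · rw [logMean_self]
    apply le_of_eq
    field_simp
    ring
  have hP : 0 < (s - t) * (log s - log t) :=
    lt_of_lt_of_le (by have := sub_ne_zero.2 hst; positivity)
      (two_mul_sq_div_add_le_sub_mul_log_sub_log hs ht)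
  have h := sub_mul_log_sub_log_le hs ht
  rw [le_div_iff₀ (by positivity)] at h
  rw [logMean_eq_sq_div hs ht hst, le_div_iff₀ hP, div_mul_eq_mul_div, div_le_iff₀ (add_pos hs ht)]
  linarith

theorem hasDerivAt_logMean_left_self {s : ℝ} (hs : 0 < s) :
    HasDerivAt (fun x => logMean x s) (1 / 2) s := by
  have hbound : ∀ᶠ x in 𝓝 s, ‖logMean x s - (x + s) / 2‖ ≤ (2 * s)⁻¹ * ‖‖x - s‖ ^ 2‖ := by
    filter_upwards [lt_mem_nhds hs] with x hx
    have hHM := two_mul_mul_div_add_le_logMean hx hs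
    have hAM := logMean_le_add_div_two hx hs
    rw [Real.norm_eq_abs, abs_sub_comm, abs_of_nonneg (by linarith), norm_pow, norm_norm,
      Real.norm_eq_abs, sq_abs]
    calc (x + s) / 2 - logMean x s ≤ (x + s) / 2 - 2 * x * s / (x + s) := by linarith
      _ = (x - s) ^ 2 / (2 * (x + s)) := by field_simp; ring
      _ ≤ (x - s) ^ 2 / (2 * s) := by gcongr; linarith
      _ = (2 * s)⁻¹ * (x - s) ^ 2 := by ring
  have h0 : HasDerivAt (fun x => logMean x s - (x + s) / 2) 0 s := by
    simpa using ((Asymptotics.IsBigO.of_bound _ hbound).hasFDerivAt one_lt_two).hasDerivAt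
  have h := h0.fun_add (((hasDerivAt_id' s).add_const s).div_const 2)
  simpa only [sub_add_cancel, zero_add] using h

theorem hasDerivAt_logMean_left_of_ne {s t : ℝ} (hs : 0 < s) (ht : 0 < t) (hst : s ≠ t) :
    HasDerivAt (fun x => logMean x t) ((log s - log t - (s - t) / s) / (log s - log t) ^ 2) s := by
  have hL := log_sub_log_ne_zero hs ht hst
  have h := ((hasDerivAt_id s).sub_const t).div ((hasDerivAt_log hs.ne').sub_const (log t)) hL
  refine (h.congr_of_eventuallyEq ?_).congr_deriv ?_
  · filter_upwards [lt_mem_nhds hs, isOpen_ne.mem_nhds hst] with x hx hxt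
    exact logMean_of_ne hx ht hxt
  · field_simp
    simp

theorem logMean₂_eq_logMean₁ (s t : ℝ) : logMean₂ s t = logMean₁ t s := by
  simp only [logMean₁, logMean₂, logMean_comm s]

theorem logMean₁_add_logMean₂ {s t : ℝ} (hs : 0 < s) (ht : 0 < t) :
    logMean₁ s t + logMean₂ s t = logMean s t ^ 2 / (s * t) := by
  rw [logMean₂_eq_logMean₁, logMean₁, logMean₁]
  rcases eq_or_ne s t with rfl | hst
  · rw [(hasDerivAt_logMean_left_self hs).deriv, logMean_self]
    field_simp
    norm_num
  · have hL := log_sub_log_ne_zero hs ht hst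
    rw [(hasDerivAt_logMean_left_of_ne hs ht hst).deriv,
      (hasDerivAt_logMean_left_of_ne ht hs hst.symm).deriv, logMean_of_ne hs ht hst,
      ← neg_sub (log s) (log t)]
    field_simp
    ring

theorem hasDerivAt_logMean_add_add {a b x : ℝ} (ha : 0 < a + x) (hb : 0 < b + x) :
    HasDerivAt (fun y => logMean (a + y) (b + y))
      (logMean (a + x) (b + x) ^ 2 / ((a + x) * (b + x))) x := by
  rcases eq_or_ne a b with rfl | hab
  · simp only [logMean_self]
    refine ((hasDerivAt_id' x).const_add a).congr_deriv ?_
    have := ha.ne'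
    field_simp
  have hne : a + x ≠ b + x := fun h => hab (add_right_cancel h)
  have hL := log_sub_log_ne_zero ha hb hne
  have hD : HasDerivAt (fun y => log (a + y) - log (b + y)) (1 / (a + x) - 1 / (b + x)) x :=
    (((hasDerivAt_id x).const_add a).log ha.ne').sub (((hasDerivAt_id x).const_add b).log hb.ne')
  refine (((hasDerivAt_const x (a - b)).div hD hL).congr_of_eventuallyEq ?_).congr_deriv ?_
  · filter_upwards [lt_mem_nhds (neg_lt_iff_pos_add'.2 ha), lt_mem_nhds (neg_lt_iff_pos_add'.2 hb)]
      with y hay hby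
    rw [Pi.div_apply, logMean_of_ne (neg_lt_iff_pos_add'.1 hay) (neg_lt_iff_pos_add'.1 hby)
      (fun h => hab (add_right_cancel h)), add_sub_add_right_eq_sub]
  · rw [logMean_of_ne ha hb hne, add_sub_add_right_eq_sub]
    field_simp
    ring

theorem concaveOn_logMean_add_add (a b : ℝ) :
    ConcaveOn ℝ (Ioi (-a) ∩ Ioi (-b)) fun x => logMean (a + x) (b + x) := by
  set D := Ioi (-a) ∩ Ioi (-b)
  have hpos : ∀ x ∈ D, 0 < a + x ∧ 0 < b + x := fun x hx =>
    ⟨neg_lt_iff_pos_add'.1 hx.1, neg_lt_iff_pos_add'.1 hx.2⟩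
  set θ := fun x => logMean (a + x) (b + x)
  have hθ : ∀ x ∈ D, HasDerivAt θ (θ x ^ 2 / ((a + x) * (b + x))) x := fun x hx =>
    hasDerivAt_logMean_add_add (hpos x hx).1 (hpos x hx).2
  have hθ' : ∀ x ∈ D, HasDerivAt (fun x => θ x ^ 2 / ((a + x) * (b + x)))
      (θ x ^ 2 * (2 * θ x - ((a + x) + (b + x))) / ((a + x) * (b + x)) ^ 2) x := by
    intro x hx
    obtain ⟨ha, hb⟩ := hpos x hx
    refine (((hθ x hx).fun_pow 2).fun_div (((hasDerivAt_id' x).const_add a).fun_mul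
      ((hasDerivAt_id' x).const_add b)) (by positivity)).congr_deriv ?_
    field_simp
    ring
  refine concaveOn_of_hasDerivWithinAt2_nonpos ((convex_Ioi _).inter (convex_Ioi _))
    (fun x hx => (hθ x hx).continuousAt.continuousWithinAt)
    (fun x hx => (hθ x (interior_subset hx)).hasDerivWithinAt)
    (fun x hx => (hθ' x (interior_subset hx)).hasDerivWithinAt) fun x hx => ?_
  obtain ⟨ha, hb⟩ := hpos x (interior_subset hx)
  have hAM := logMean_le_add_div_two ha hb
  exact div_nonpos_of_nonpos_of_nonneg
    (mul_nonpos_of_nonneg_of_nonpos (sq_nonneg _) (by linarith)) (sq_nonneg _)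

theorem logMean_add_one_le (u v : ℝ) (hu : 0 < u) (hv : 0 < v) :
    logMean (u + 1) (v + 1) ≤ logMean u v + logMean₁ u v + logMean₂ u v := by
  have h0 : (0 : ℝ) ∈ Ioi (-u) ∩ Ioi (-v) := ⟨neg_lt_zero.2 hu, neg_lt_zero.2 hv⟩
  have h1 : (1 : ℝ) ∈ Ioi (-u) ∩ Ioi (-v) := ⟨mem_Ioi.2 (by linarith), mem_Ioi.2 (by linarith)⟩
  have htangent := (concaveOn_logMean_add_add u v).slope_le_of_hasDerivAt h0 h1 one_pos
    (hasDerivAt_logMean_add_add (x := 0) (by simpa) (by simpa))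
  simp only [slope_def_field, add_zero, sub_zero, div_one] at htangent
  rw [add_assoc, logMean₁_add_logMean₂ hu hv]
  linarith
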